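/- Let X be a non-hyperelliptic compact Riemann surface of genus 3 and D an even theta characteristic on X. Then h^0(X, D) = 0, i.e., D is not linearly equivalent to an effective divisor. -/
import Mathlib


/-! An abstract divisor-theoretic framework for compact Riemann surfaces. -/

/-- The degree of a divisor (a finitely supported `ℤ`-valued function on points). -/
def Div.deg {P : Type*} (D : P →₀ ℤ) : ℤ := D.sum fun _ n => n

/-- An abstract compact Riemann surface (smooth projective curve over `ℂ`), recorded
through its divisor theory: genus, dimensions `h⁰(D)` of spaces of sections of the line
bundles `O(D)`, a canonical divisor `K`, and linear equivalence, subject to the standard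
axioms (Riemann–Roch, `deg K = 2g - 2`, etc.). -/
structure CompactRiemannSurface where
  /-- the points of the surface -/
  Point : Type
  nonempty : Nonempty Point
  /-- the genus -/
  genus : ℕ
  /-- `h0 D = dim H⁰(X, O(D))` -/
  h0 : (Point →₀ ℤ) → ℕ
  /-- a canonical divisor -/
  K : Point →₀ ℤ
  /-- linear equivalence of divisors -/
  LinEquiv : (Point →₀ ℤ) → (Point →₀ ℤ) → Prop
  linEquiv_equivalence : Equivalence LinEquiv
  linEquiv_add : ∀ {D D' E E'}, LinEquiv D D' → LinEquiv E E' → LinEquiv (D + E) (D' + E')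
  h0_congr : ∀ {D D'}, LinEquiv D D' → h0 D = h0 D'
  deg_congr : ∀ {D D'}, LinEquiv D D' → Div.deg D = Div.deg D'
  h0_zero_divisor : h0 0 = 1
  h0_eq_zero_of_deg_neg : ∀ {D}, Div.deg D < 0 → h0 D = 0
  /-- the Riemann–Roch theorem -/
  riemann_roch : ∀ D, (h0 D : ℤ) - h0 (K - D) = Div.deg D - genus + 1
  deg_K : Div.deg K = 2 * (genus : ℤ) - 2
  /-- `h0 D > 0` iff `D` is linearly equivalent to an effective divisor -/
  h0_pos_iff : ∀ D, 0 < h0 D ↔ ∃ E, 0 ≤ E ∧ LinEquiv D E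

namespace CompactRiemannSurface

variable (S : CompactRiemannSurface)

/-- A divisor is special if both `D` and `K - D` are linearly equivalent to effective
divisors, i.e. `h⁰(D) > 0` and `h⁰(K - D) > 0`. -/
def Special (D : S.Point →₀ ℤ) : Prop := 0 < S.h0 D ∧ 0 < S.h0 (S.K - D)

/-- `X` is hyperelliptic: it admits a degree-2 map to `ℙ¹`, equivalently a divisor of
degree 2 with `h⁰ ≥ 2` (a `g¹₂`). -/
def Hyperelliptic : Prop := ∃ D : S.Point →₀ ℤ, Div.deg D = 2 ∧ 2 ≤ S.h0 D

/-- `O(D)` is globally generated (base-point free): for every point `p` some global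
section does not vanish at `p`, i.e. `h⁰(D - p) < h⁰(D)` for all `p`. -/
def GloballyGenerated (D : S.Point →₀ ℤ) : Prop :=
  ∀ p : S.Point, S.h0 (D - Finsupp.single p 1) < S.h0 D

/-- `O(D)` is very ample: global sections embed `X` into projective space, equivalently
`h⁰(D - p - q) = h⁰(D) - 2` for all (not necessarily distinct) points `p, q`. -/
def VeryAmple (D : S.Point →₀ ℤ) : Prop :=
  ∀ p q : S.Point, S.h0 (D - Finsupp.single p 1 - Finsupp.single q 1) + 2 = S.h0 D

/-- A theta characteristic: a divisor `D` with `2D` linearly equivalent to the canonical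
divisor. -/
def ThetaChar (D : S.Point →₀ ℤ) : Prop := S.LinEquiv (2 • D) S.K

end CompactRiemannSurface

/-- On a non-hyperelliptic compact Riemann surface of genus 3, every
even theta characteristic `D` has `h⁰(X, D) = 0`, i.e. `D` is not linearly equivalent
to an effective divisor. -/
theorem even_theta_char_genus_three_not_effective (S : CompactRiemannSurface)
    (hg : S.genus = 3) (hhyp : ¬ S.Hyperelliptic)
    (D : S.Point →₀ ℤ) (hθ : S.ThetaChar D) (heven : Even (S.h0 D)) :
    S.h0 D = 0 := by
  by_contra h
  have hpos : 0 < S.h0 D := Nat.pos_of_ne_zero h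
  have h2 : 2 ≤ S.h0 D := by
    rcases heven with ⟨k, hk⟩
    omega
  have hdegadd : Div.deg (D + D) = Div.deg D + Div.deg D := by
    simp [Div.deg, Finsupp.sum_add_index']
  have hdeg2 : Div.deg (2 • D) = Div.deg S.K := S.deg_congr hθ
  rw [two_smul, hdegadd, S.deg_K, hg] at hdeg2
  exact hhyp ⟨D, by omega, h2⟩
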